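/- Preservation for the CPS fragment of the symmetric data/codata calculus: if the closed command c₁ is well-typed (⋄ ⊢ c₁ :cmd with respect to a well-formed program P) and c₁ reduces in one step to c₂ (c₁ ▷ c₂), then c₂ is also well-typed (⋄ ⊢ c₂ :cmd). -/

import Mathlib

namespace SymCalc

/-! Basic syntactic categories of the symmetric data/codata calculus (CPS fragment). -/

abbrev Var := String
abbrev TName := String
abbrev XName := String

inductive Polarity | dat | cod
deriving DecidableEq, Repr

inductive Orientation | prd | con
deriving DecidableEq, Repr

inductive Strategy | cbv | cbn
deriving DecidableEq, Repr

def Polarity.flip : Polarity → Polarity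
  | .dat => .cod | .cod => .dat

def Orientation.flip : Orientation → Orientation
  | .prd => .con | .con => .prd

def Strategy.flip : Strategy → Strategy
  | .cbv => .cbn | .cbn => .cbv

/-- `val p` : the orientation of the canonical xtors of a type of polarity `p`. -/
def Polarity.val : Polarity → Orientation
  | .dat => .prd | .cod => .con

/-- `cnt p` : the orientation of (co)pattern matches on a type of polarity `p`. -/
def Polarity.cnt : Polarity → Orientation
  | .dat => .con | .cod => .prd

/-- Typing contexts: each variable carries an orientation (producer/consumer) and a type name.
The head of the list is the innermost binding. -/
abbrev Ctx := List (Var × Orientation × TName)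

/-- Erase the variable names of a context, keeping orientations and types. -/
def eraseCtx (Γ : Ctx) : List (Orientation × TName) := Γ.map (·.2)

mutual
/-- Expressions `e ::= x | 𝒳σ | match_p T { 𝒳Δ ⇒ c; … }`. -/
inductive Expr : Type
  | var : Var → Expr
  | xtor : XName → List Expr → Expr
  | mtch : Polarity → TName → List (XName × Ctx × Cmd) → Expr
/-- Commands `c ::= e₁ ≫ e₂ | Done`. -/
inductive Cmd : Type
  | cut : Expr → Expr → Cmd
  | done : Cmd
end

/-! Substitution. -/

abbrev Env := List (Var × Expr)

/-- Remove the bindings shadowed by the bound variables `xs`. -/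
def shadowV (xs : List Var) (m : Env) : Env :=
  m.filter (fun q => ¬ xs.contains q.1)

mutual
/-- Substitute the (closed) expressions of `m` for free variables in an expression. -/
def substExpr (m : Env) : Expr → Expr
  | .var x => (m.lookup x).getD (.var x)
  | .xtor n σ => .xtor n (σ.attach.map (fun ⟨e, _⟩ => substExpr m e))
  | .mtch p T cases =>
      .mtch p T (cases.attach.map
        (fun ⟨cs, _⟩ => (cs.1, cs.2.1, substCmd (shadowV (cs.2.1.map (·.1)) m) cs.2.2)))
termination_by e => sizeOf e
decreasing_by
  · have h := List.sizeOf_lt_of_mem ‹e ∈ σ›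
    simp only [Expr.xtor.sizeOf_spec]; omega
  · have h := List.sizeOf_lt_of_mem ‹cs ∈ cases›
    obtain ⟨n', Δ', c'⟩ := cs
    simp only [Expr.mtch.sizeOf_spec, Prod.mk.sizeOf_spec] at h ⊢; omega
/-- Substitute the (closed) expressions of `m` for free variables in a command. -/
def substCmd (m : Env) : Cmd → Cmd
  | .cut e₁ e₂ => .cut (substExpr m e₁) (substExpr m e₂)
  | .done => .done
termination_by c => sizeOf c
decreasing_by
  · simp only [Cmd.cut.sizeOf_spec]; omega
  · simp only [Cmd.cut.sizeOf_spec]; omega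
end

/-- Pair the variables of a context with the expressions of a substitution. -/
def bindArgs (Δ : Ctx) (σ : List Expr) : Env := List.zip (Δ.map (·.1)) σ

/-! Programs. -/

/-- A function declaration `𝒳Π := match_p T { 𝒴Δ ⇒ c; … }` (co)pattern matching on
all xtors of the type it belongs to. -/
structure FunDecl where
  name : XName
  args : Ctx
  cases : List (XName × Ctx × Cmd)

/-- A type declaration `s p type T { 𝒳Δ; … } with f₁ … fₙ`. -/
structure TypeDecl where
  strat : Strategy
  pol : Polarity
  name : TName
  xtors : List (XName × Ctx)
  funs : List FunDecl

/-- A program: a list of type declarations together with a top-level command. -/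
structure Program where
  decls : List TypeDecl
  main : Cmd

def Program.findType (P : Program) (T : TName) : Option TypeDecl :=
  P.decls.find? (fun td => td.name = T)

/-! Typing. -/

mutual
/-- Expression typing `Γ ⊢ e :ᵒ T` (producer/consumer typing). -/
inductive HasTy (P : Program) : Ctx → Expr → Orientation → TName → Prop
  | var : ∀ Γ x o T, Γ.lookup x = some (o, T) → HasTy P Γ (.var x) o T
  | xtor : ∀ Γ td X Δ τ, td ∈ P.decls → (X, Δ) ∈ td.xtors →
      SubstTy P Γ τ Δ → HasTy P Γ (.xtor X τ) td.pol.val td.name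
  | fn : ∀ Γ td f τ, td ∈ P.decls → f ∈ td.funs →
      SubstTy P Γ τ f.args → HasTy P Γ (.xtor f.name τ) td.pol.cnt td.name
  | mtch : ∀ Γ td cases, td ∈ P.decls →
      cases.map (fun cs => (cs.1, eraseCtx cs.2.1)) = td.xtors.map (fun g => (g.1, eraseCtx g.2)) →
      (∀ cs ∈ cases, CmdTy P (cs.2.1 ++ Γ) cs.2.2) →
      HasTy P Γ (.mtch td.pol td.name cases) td.pol.cnt td.name
/-- Substitution typing `Γ ⊢ σ : Δ`. -/
inductive SubstTy (P : Program) : Ctx → List Expr → Ctx → Prop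
  | nil : ∀ Γ, SubstTy P Γ [] []
  | cons : ∀ Γ σ Δ e x o T, SubstTy P Γ σ Δ → HasTy P Γ e o T →
      SubstTy P Γ (e :: σ) ((x, o, T) :: Δ)
/-- Command typing `Γ ⊢ c :cmd`. -/
inductive CmdTy (P : Program) : Ctx → Cmd → Prop
  | cut : ∀ Γ e₁ e₂ T, HasTy P Γ e₁ .prd T → HasTy P Γ e₂ .con T → CmdTy P Γ (.cut e₁ e₂)
  | done : ∀ Γ, CmdTy P Γ .done
end

/-! Operational semantics. -/

/-- One-step reduction of closed commands, relative to a program `P`. -/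
inductive Step (P : Program) : Cmd → Cmd → Prop
  | mtch : ∀ X σ T cases Δ c, (X, Δ, c) ∈ cases →
      Step P (.cut (.xtor X σ) (.mtch .dat T cases)) (substCmd (bindArgs Δ σ) c)
  | comtch : ∀ X σ T cases Δ c, (X, Δ, c) ∈ cases →
      Step P (.cut (.mtch .cod T cases) (.xtor X σ)) (substCmd (bindArgs Δ σ) c)
  | conCall : ∀ td f Y Δ c σ τ, td ∈ P.decls → td.pol = .dat → f ∈ td.funs →
      (Y, Δ, c) ∈ f.cases →
      Step P (.cut (.xtor Y τ) (.xtor f.name σ))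
        (substCmd (bindArgs f.args σ) (substCmd (bindArgs Δ τ) c))
  | prdCall : ∀ td f Y Δ c σ τ, td ∈ P.decls → td.pol = .cod → f ∈ td.funs →
      (Y, Δ, c) ∈ f.cases →
      Step P (.cut (.xtor f.name σ) (.xtor Y τ))
        (substCmd (bindArgs f.args σ) (substCmd (bindArgs Δ τ) c))

/-! Well-formedness of programs. -/

/-- Well-formedness of a function declaration belonging to the type declaration `td`
(rule Wf-Fun): the (co)pattern match is exhaustive, binds exactly the declared
argument contexts, and each case body typechecks. -/
def FunWf (P : Program) (td : TypeDecl) (f : FunDecl) : Prop :=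
  f.cases.map (fun cs => (cs.1, cs.2.1)) = td.xtors ∧
  ∀ cs ∈ f.cases, CmdTy P (cs.2.1 ++ f.args) cs.2.2

/-- All names used in a program are unambiguous. -/
def NamesUnambiguous (P : Program) : Prop :=
  (P.decls.map (·.name)).Nodup ∧
  (P.decls.flatMap (fun td => td.xtors.map (·.1) ++ td.funs.map (·.name))).Nodup

/-- Well-formedness of programs (rules Wf-Prog and Wf-Type). -/
def Program.wf (P : Program) : Prop :=
  NamesUnambiguous P ∧
  (∀ td ∈ P.decls, ∀ f ∈ td.funs, FunWf P td f) ∧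
  CmdTy P [] P.main

/-!
Every redex substitutes the arguments `σ` of an xtor application `𝒳σ` into a case body typed
under the argument context `Δ` of the matching case. Since names are unambiguous, whether `𝒳σ`
was typed by T-Xtor or by T-Fun, `σ` was checked against the one context the program declares
for `𝒳`, and T-Match (resp. Wf-Fun) makes `Δ` agree with it up to variable names. Substituting
closed well-typed expressions for the variables of `Δ` then preserves typing of the body.
-/

end SymCalc

namespace List

variable {α β : Type*} [BEq α] [LawfulBEq α]

theorem lookup_cons_of_ne {l : List (α × β)} {x y : α} {b : β} (h : x ≠ y) :
    ((y, b) :: l).lookup x = l.lookup x := by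
  simp [List.lookup_cons, beq_false_of_ne h]

theorem lookup_eq_none_iff_not_mem_map_fst {l : List (α × β)} {x : α} :
    l.lookup x = none ↔ x ∉ l.map Prod.fst := by
  simp only [List.lookup_eq_none_iff, bne_iff_ne, ne_eq, List.mem_map, not_exists, not_and]
  exact ⟨fun h p hp hx => h p hp hx.symm, fun h p hp hx => h p hp hx.symm⟩

theorem lookup_filter_fst {l : List (α × β)} (p : α → Bool) (x : α) :
    (l.filter (fun q => p q.1)).lookup x = if p x then l.lookup x else none := by
  induction l with
  | nil => simp
  | cons q l ih =>
    obtain ⟨y, b⟩ := q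
    by_cases hxy : x = y
    · subst hxy
      cases hx : p x <;> simp [hx, ih]
    · by_cases hy : p y <;> simp [hy, lookup_cons_of_ne hxy, ih]

end List

namespace SymCalc

theorem lookup_shadowV (xs : List Var) (m : Env) (x : Var) :
    (shadowV xs m).lookup x = if x ∈ xs then none else m.lookup x := by
  simpa [shadowV] using List.lookup_filter_fst (l := m) (fun y => !xs.contains y) x

section Typing

variable {P : Program}

mutual
theorem HasTy.append_right (Γ' : Ctx) :
    ∀ {Γ e o T}, HasTy P Γ e o T → HasTy P (Γ ++ Γ') e o T
  | _, _, _, _, .var _ _ _ _ hx => .var _ _ _ _ (by rw [List.lookup_append, hx]; rfl)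
  | _, _, _, _, .xtor _ _ _ _ _ htd hX hτ => .xtor _ _ _ _ _ htd hX (hτ.append_right Γ')
  | _, _, _, _, .fn _ _ _ _ htd hf hτ => .fn _ _ _ _ htd hf (hτ.append_right Γ')
  | _, _, _, _, .mtch _ _ _ htd hcases hbody =>
      .mtch _ _ _ htd hcases fun cs hcs => List.append_assoc .. ▸ (hbody cs hcs).append_right Γ'

theorem SubstTy.append_right (Γ' : Ctx) :
    ∀ {Γ σ Δ}, SubstTy P Γ σ Δ → SubstTy P (Γ ++ Γ') σ Δ
  | _, _, _, .nil _ => .nil _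
  | _, _, _, .cons _ _ _ _ _ _ _ hσ he => .cons _ _ _ _ _ _ _ (hσ.append_right Γ') (he.append_right Γ')

theorem CmdTy.append_right (Γ' : Ctx) :
    ∀ {Γ c}, CmdTy P Γ c → CmdTy P (Γ ++ Γ') c
  | _, _, .cut _ _ _ _ h₁ h₂ => .cut _ _ _ _ (h₁.append_right Γ') (h₂.append_right Γ')
  | _, _, .done _ => .done _
end

/- The substituted expressions are closed, so pushing an environment under a binder needs
shadowing but no renaming. -/
def EnvTy (P : Program) (Γ : Ctx) (m : Env) (Γ' : Ctx) : Prop :=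
  ∀ x o T, Γ.lookup x = some (o, T) →
    (∃ e, m.lookup x = some e ∧ HasTy P [] e o T) ∨ (m.lookup x = none ∧ Γ'.lookup x = some (o, T))

theorem EnvTy.shadowV {Γ Γ' : Ctx} {m : Env} (h : EnvTy P Γ m Γ') (Δ : Ctx) :
    EnvTy P (Δ ++ Γ) (shadowV (Δ.map (·.1)) m) (Δ ++ Γ') := by
  intro x o T hx
  rw [List.lookup_append] at hx
  rw [lookup_shadowV, List.lookup_append]
  cases hΔ : Δ.lookup x with
  | some v =>
    have hmem : x ∈ Δ.map (·.1) := by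
      by_contra hnot
      simp [List.lookup_eq_none_iff_not_mem_map_fst.mpr hnot] at hΔ
    simp_all
  | none =>
    have hnot := List.lookup_eq_none_iff_not_mem_map_fst.mp hΔ
    simp only [hΔ, Option.none_or, hnot, if_false] at hx ⊢
    exact h x o T hx

theorem SubstTy.envTy_bindArgs (Γ : Ctx) :
    ∀ {σ Δ}, SubstTy P [] σ Δ → EnvTy P (Δ ++ Γ) (bindArgs Δ σ) Γ
  | _, _, .nil _ => fun _ _ _ hx => .inr ⟨rfl, hx⟩
  | _, _, .cons _ _ _ e y _ _ hσ he => by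
    intro x o T hx
    by_cases hxy : x = y
    · subst hxy
      simp only [List.cons_append, List.lookup_cons_self, Option.some.injEq, Prod.mk.injEq] at hx
      obtain ⟨rfl, rfl⟩ := hx
      exact .inl ⟨e, by simp [bindArgs], he⟩
    · rw [List.cons_append, List.lookup_cons_of_ne hxy] at hx
      simpa [bindArgs, List.lookup_cons_of_ne hxy] using hσ.envTy_bindArgs Γ x o T hx

@[simp]
theorem substExpr_xtor (m : Env) (X : XName) (σ : List Expr) :
    substExpr m (.xtor X σ) = .xtor X (σ.map (substExpr m)) := by
  rw [substExpr, List.attach_map_val (f := substExpr m)]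

@[simp]
theorem substExpr_mtch (m : Env) (p : Polarity) (T : TName) (cases : List (XName × Ctx × Cmd)) :
    substExpr m (.mtch p T cases) = .mtch p T (cases.map
      fun cs => (cs.1, cs.2.1, substCmd (shadowV (cs.2.1.map (·.1)) m) cs.2.2)) := by
  rw [substExpr]
  congr 1
  exact List.attach_map_val (l := cases)
    (f := fun cs => (cs.1, cs.2.1, substCmd (shadowV (cs.2.1.map (·.1)) m) cs.2.2))

mutual
theorem HasTy.subst {Γ' : Ctx} {m : Env} :
    ∀ {Γ e o T}, EnvTy P Γ m Γ' → HasTy P Γ e o T → HasTy P Γ' (substExpr m e) o T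
  | _, _, _, _, hm, .var _ x o T hx => by
    rcases hm x o T hx with ⟨e, he, hty⟩ | ⟨he, hx'⟩
    · simpa [substExpr, he] using hty.append_right Γ'
    · simpa [substExpr, he] using HasTy.var _ _ _ _ hx'
  | _, _, _, _, hm, .xtor _ _ _ _ _ htd hX hτ => by
    simpa using HasTy.xtor _ _ _ _ _ htd hX (hτ.subst hm)
  | _, _, _, _, hm, .fn _ _ _ _ htd hf hτ => by
    simpa using HasTy.fn _ _ _ _ htd hf (hτ.subst hm)
  | _, _, _, _, hm, .mtch _ _ _ htd hcases hbody => by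
    rw [substExpr_mtch]
    refine .mtch _ _ _ htd (by rw [List.map_map, ← hcases]; rfl) ?_
    simp only [List.mem_map, forall_exists_index, and_imp]
    rintro _ cs hcs rfl
    exact (hbody cs hcs).subst (hm.shadowV cs.2.1)

theorem SubstTy.subst {Γ' : Ctx} {m : Env} :
    ∀ {Γ σ Δ}, EnvTy P Γ m Γ' → SubstTy P Γ σ Δ → SubstTy P Γ' (σ.map (substExpr m)) Δ
  | _, _, _, _, .nil _ => .nil _
  | _, _, _, hm, .cons _ _ _ _ _ _ _ hσ he => .cons _ _ _ _ _ _ _ (hσ.subst hm) (he.subst hm)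

theorem CmdTy.subst {Γ' : Ctx} {m : Env} :
    ∀ {Γ c}, EnvTy P Γ m Γ' → CmdTy P Γ c → CmdTy P Γ' (substCmd m c)
  | _, _, hm, .cut _ _ _ _ h₁ h₂ => by
    rw [substCmd]
    exact .cut _ _ _ _ (h₁.subst hm) (h₂.subst hm)
  | _, _, _, .done _ => by
    rw [substCmd]
    exact .done _
end

theorem CmdTy.subst_bindArgs {Γ Δ : Ctx} {σ : List Expr} {c : Cmd} (hc : CmdTy P (Δ ++ Γ) c)
    (hσ : SubstTy P [] σ Δ) : CmdTy P Γ (substCmd (bindArgs Δ σ) c) :=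
  hc.subst (hσ.envTy_bindArgs Γ)

theorem SubstTy.of_eraseCtx_eq {Γ : Ctx} :
    ∀ {σ Δ₁ Δ₂}, SubstTy P Γ σ Δ₁ → eraseCtx Δ₁ = eraseCtx Δ₂ → SubstTy P Γ σ Δ₂
  | _, _, [], .nil _, _ => .nil _
  | _, _, (_, _, _) :: _, .cons _ _ _ _ _ _ _ hσ he, hΔ => by
    simp only [eraseCtx, List.map_cons, List.cons.injEq, Prod.mk.injEq] at hΔ
    obtain ⟨⟨rfl, rfl⟩, hΔ⟩ := hΔ
    exact .cons _ _ _ _ _ _ _ (hσ.of_eraseCtx_eq hΔ) he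

end Typing

def Program.signatures (P : Program) : List (XName × Ctx) :=
  P.decls.flatMap fun td => td.xtors ++ td.funs.map fun f => (f.name, f.args)

section Signatures

variable {P : Program}

theorem mem_signatures_of_xtor {td : TypeDecl} {X : XName} {Δ : Ctx} (htd : td ∈ P.decls)
    (hX : (X, Δ) ∈ td.xtors) : (X, Δ) ∈ P.signatures :=
  List.mem_flatMap.2 ⟨td, htd, List.mem_append_left _ hX⟩

theorem mem_signatures_of_fun {td : TypeDecl} {f : FunDecl} (htd : td ∈ P.decls)
    (hf : f ∈ td.funs) : (f.name, f.args) ∈ P.signatures :=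
  List.mem_flatMap.2 ⟨td, htd, List.mem_append_right _ (List.mem_map_of_mem hf)⟩

theorem NamesUnambiguous.eq_of_mem_signatures (hN : NamesUnambiguous P) {X : XName}
    {Δ₁ Δ₂ : Ctx} (h₁ : (X, Δ₁) ∈ P.signatures) (h₂ : (X, Δ₂) ∈ P.signatures) : Δ₁ = Δ₂ := by
  have hnodup : (P.signatures.map Prod.fst).Nodup := by
    simpa [Program.signatures, List.map_flatMap, Function.comp_def] using hN.2
  exact (Prod.ext_iff.mp (List.inj_on_of_nodup_map hnodup h₁ h₂ rfl)).2

theorem HasTy.substTy_of_mem_signatures (hN : NamesUnambiguous P) {Γ : Ctx} {X : XName}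
    {τ : List Expr} {o : Orientation} {T : TName} {Δ : Ctx} (h : HasTy P Γ (.xtor X τ) o T)
    (hX : (X, Δ) ∈ P.signatures) : SubstTy P Γ τ Δ := by
  cases h with
  | xtor _ _ _ _ _ htd hX' hτ => rwa [hN.eq_of_mem_signatures hX (mem_signatures_of_xtor htd hX')]
  | fn _ _ _ _ htd hf hτ => rwa [hN.eq_of_mem_signatures hX (mem_signatures_of_fun htd hf)]

theorem CmdTy.subst_of_mtch (hN : NamesUnambiguous P) {X : XName} {σ : List Expr}
    {p : Polarity} {T : TName} {cases : List (XName × Ctx × Cmd)} {Δ : Ctx} {c : Cmd}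
    {o o' : Orientation} {T₁ T₂ : TName} (hX : HasTy P [] (.xtor X σ) o T₁)
    (hm : HasTy P [] (.mtch p T cases) o' T₂) (hmem : (X, Δ, c) ∈ cases) :
    CmdTy P [] (substCmd (bindArgs Δ σ) c) := by
  cases hm with
  | mtch _ td _ htd hcases hbody =>
    have hsig : (X, eraseCtx Δ) ∈ td.xtors.map fun g => (g.1, eraseCtx g.2) :=
      hcases ▸ List.mem_map_of_mem (f := fun cs => (cs.1, eraseCtx cs.2.1)) hmem
    obtain ⟨⟨_, Δ'⟩, hΔ', he⟩ := List.mem_map.mp hsig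
    simp only [Prod.mk.injEq] at he
    obtain ⟨rfl, hΔ⟩ := he
    have hσ := hX.substTy_of_mem_signatures hN (mem_signatures_of_xtor htd hΔ')
    exact (hbody _ hmem).subst_bindArgs (hσ.of_eraseCtx_eq hΔ)

theorem CmdTy.subst_of_call (hN : NamesUnambiguous P) {td : TypeDecl} {f : FunDecl}
    (htd : td ∈ P.decls) (hf : f ∈ td.funs) (hwf : FunWf P td f) {Y : XName}
    {τ σ : List Expr} {Δ : Ctx} {c : Cmd} {o o' : Orientation} {T₁ T₂ : TName}
    (hY : HasTy P [] (.xtor Y τ) o T₁) (hcall : HasTy P [] (.xtor f.name σ) o' T₂)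
    (hmem : (Y, Δ, c) ∈ f.cases) :
    CmdTy P [] (substCmd (bindArgs f.args σ) (substCmd (bindArgs Δ τ) c)) := by
  have hYΔ : (Y, Δ) ∈ td.xtors := hwf.1 ▸ List.mem_map_of_mem (f := fun cs => (cs.1, cs.2.1)) hmem
  have hτ := hY.substTy_of_mem_signatures hN (mem_signatures_of_xtor htd hYΔ)
  have hσ := hcall.substTy_of_mem_signatures hN (mem_signatures_of_fun htd hf)
  have hbody : CmdTy P (f.args ++ []) (substCmd (bindArgs Δ τ) c) := by
    simpa using (hwf.2 _ hmem).subst_bindArgs hτ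
  exact hbody.subst_bindArgs hσ

end Signatures

/-- **Preservation** (Theorem 3.1): if the closed command `c₁` is well-typed with respect to
a well-formed program `P` and `c₁ ▷ c₂`, then `c₂` is also well-typed. -/
theorem preservation (P : Program) (hP : P.wf) (c₁ c₂ : Cmd)
    (h₁ : CmdTy P [] c₁) (hstep : Step P c₁ c₂) :
    CmdTy P [] c₂ := by
  obtain ⟨hN, hwf, -⟩ := hP
  cases hstep with
  | mtch _ _ _ _ _ _ hmem =>
    cases h₁ with
    | cut _ _ _ _ hX hm => exact .subst_of_mtch hN hX hm hmem
  | comtch _ _ _ _ _ _ hmem =>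
    cases h₁ with
    | cut _ _ _ _ hm hX => exact .subst_of_mtch hN hX hm hmem
  | conCall td f _ _ _ _ _ htd _ hf hmem =>
    cases h₁ with
    | cut _ _ _ _ hY hcall => exact .subst_of_call hN htd hf (hwf td htd f hf) hY hcall hmem
  | prdCall td f _ _ _ _ _ htd _ hf hmem =>
    cases h₁ with
    | cut _ _ _ _ hcall hY => exact .subst_of_call hN htd hf (hwf td htd f hf) hY hcall hmem

end SymCalc
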